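/- Let A be a closed, densely defined operator on a complex Hilbert space H satisfying A*A = -A² (equality of unbounded operators including domains). Then A is skew-adjoint, i.e., A* = -A. -/

import Mathlib

/-!
Orthogonally projecting `(w, 0)` onto the closed graph of `A` in `H ⊕₂ H` gives bounded operators
`ρ = (1 + A†A)⁻¹` and `σ = Aρ`. The hypothesis `A†A = -A²` makes `A` commute with `A†A`, whence
`ρA ⊆ σ`, `σρ = ρσ` and `σ†(1 - ρ) = -(1 - ρ)σ`; together with `ker (1 - ρ) ⊆ ker σ` these force
`σ† = -σ`. Hence `A† = -A` on the ranges of `ρ` and `σ`, and `x = ρt ± σt` solves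
`x ± A†x = x ∓ Ax = t`. So `1 ± A` and `1 ± A†` are all onto; as `ker (1 + A)` is orthogonal to the
range of `1 + A†` and vice versa, the graphs of `A†` and `-A` coincide.
-/

open LinearPMap

variable {H : Type*} [NormedAddCommGroup H] [InnerProductSpace ℂ H] [CompleteSpace H]

/-- Composition of two (possibly unbounded) partially defined operators, with the
natural domain \`{x ∈ D(f) : f x ∈ D(g)}\`. -/
noncomputable def LinearPMap.pcomp (g f : H →ₗ.[ℂ] H) : H →ₗ.[ℂ] H :=
  g.comp (f.domRestrict ((g.domain.comap f.toFun).map f.domain.subtype))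
    (fun x => by
      obtain ⟨hS, hD⟩ := x.2
      obtain ⟨y, hy, hyx⟩ := hS
      rw [LinearPMap.domRestrict_apply (y := y) hyx.symm]
      exact hy)

open scoped InnerProductSpace

namespace ContinuousLinearMap

variable {𝕜 E : Type*} [RCLike 𝕜] [NormedAddCommGroup E] [InnerProductSpace 𝕜 E] [CompleteSpace E]

theorem star_eq_neg_of_commute {σ P : E →L[𝕜] E} (hP : IsSelfAdjoint P)
    (hker : ∀ m, P m = 0 → σ m = 0) (hcomm : Commute σ P) (hanti : star σ * P = -(P * σ)) :
    star σ = -σ := by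
  have hstar : ∀ x y, ⟪star σ x, y⟫_𝕜 = ⟪x, σ y⟫_𝕜 := fun x y => by
    rw [star_eq_adjoint, adjoint_inner_left]
  have hcomm' : Commute (star σ) P := by simpa [hP.star_eq] using hcomm.star_star
  have hker' : ∀ m, P m = 0 → star σ m = 0 := fun m hm => by
    have hPm : P (star σ m) = 0 := by
      rw [← mul_apply_eq_comp, ← hcomm'.eq, mul_apply_eq_comp, hm, _root_.map_zero]
    rw [← inner_self_eq_zero (𝕜 := 𝕜), hstar, hker _ hPm, inner_zero_right]
  -- `σ + star σ` is self-adjoint and maps into `ker P`, on which it vanishes.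
  have hPS : P * (σ + star σ) = 0 := by
    rw [mul_add, ← hcomm.eq, ← hcomm'.eq, hanti, hcomm.eq, add_neg_cancel]
  have hS : ∀ x y, P y = 0 → ⟪σ x + star σ x, y⟫_𝕜 = 0 := fun x y hy => by
    rw [inner_add_left, ← adjoint_inner_right, ← star_eq_adjoint, hker' y hy, hstar, hker y hy,
      inner_zero_right, add_zero]
  ext x
  rw [_root_.neg_apply, eq_neg_iff_add_eq_zero, add_comm]
  exact inner_self_eq_zero.mp (hS x _ (by simpa using congr($hPS x)))

end ContinuousLinearMap

namespace LinearPMap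

theorem mem_graph_neg {R E F : Type*} [Ring R] [AddCommGroup E] [Module R E] [AddCommGroup F]
    [Module R F] {f : E →ₗ.[R] F} {x : E} {z : F} :
    (x, z) ∈ (-f).graph ↔ (x, -z) ∈ f.graph := by
  simp [neg_eq_iff_eq_neg]

section FormalAdjoint

variable {𝕜 E : Type*} [RCLike 𝕜] [NormedAddCommGroup E] [InnerProductSpace 𝕜 E]
  {f g : E →ₗ.[𝕜] E}

theorem IsFormalAdjoint.inner_eq_of_mem_graph (hfg : f.IsFormalAdjoint g) {a b c d : E}
    (hab : (a, b) ∈ f.graph) (hcd : (c, d) ∈ g.graph) : ⟪b, c⟫_𝕜 = ⟪a, d⟫_𝕜 := by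
  obtain ⟨a, rfl, rfl⟩ := (mem_graph_iff f).mp hab
  obtain ⟨c, rfl, rfl⟩ := (mem_graph_iff g).mp hcd
  exact hfg a c

theorem IsFormalAdjoint.eq_zero_of_mem_graph (hfg : f.IsFormalAdjoint g)
    (hg : ∀ t, ∃ x, (x, t - x) ∈ g.graph) {w : E} (hw : (w, -w) ∈ f.graph) : w = 0 := by
  obtain ⟨c, hc⟩ := hg w
  have h := hfg.inner_eq_of_mem_graph hw hc
  rw [inner_neg_left, inner_sub_right] at h
  exact inner_self_eq_zero.mp (by linear_combination -h)

theorem IsFormalAdjoint.mem_graph_neg_of_forall_exists (hfg : f.IsFormalAdjoint g)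
    (hf : ∀ t, ∃ x, (x, t - x) ∈ f.graph ∧ (x, x - t) ∈ g.graph)
    (hg : ∀ t, ∃ x, (x, t - x) ∈ g.graph) {y z : E} (hyz : (y, z) ∈ f.graph) :
    (y, -z) ∈ g.graph := by
  obtain ⟨x, hxf, hxg⟩ := hf (y + z)
  have hyx : y - x = 0 := by
    refine hfg.eq_zero_of_mem_graph hg ?_
    have hsub := f.graph.sub_mem hyz hxf
    rw [Prod.mk_sub_mk] at hsub
    convert hsub using 2
    abel
  rw [sub_eq_zero] at hyx
  convert hxg using 2
  simp [hyx]

end FormalAdjoint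

omit [CompleteSpace H] in
theorem mem_graph_pcomp {g f : H →ₗ.[ℂ] H} {x z : H} :
    (x, z) ∈ (g.pcomp f).graph ↔ ∃ y, (x, y) ∈ f.graph ∧ (y, z) ∈ g.graph := by
  simp only [mem_graph_iff, Subtype.exists]
  constructor
  · rintro ⟨x', ⟨⟨⟨y, hy⟩, hyg, rfl⟩, hx'⟩, rfl, rfl⟩
    exact ⟨f ⟨y, hy⟩, ⟨y, hy, rfl, rfl⟩, _, hyg, rfl, rfl⟩
  · rintro ⟨y, ⟨x, hx, rfl, rfl⟩, y', hy', rfl, rfl⟩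
    exact ⟨x, ⟨⟨⟨x, hx⟩, hy', rfl⟩, hx⟩, rfl, congrArg g (Subtype.ext (domRestrict_apply rfl))⟩

omit [CompleteSpace H] in
theorem mem_graph_iff_of_pcomp_eq_neg {g f : H →ₗ.[ℂ] H} (h : g.pcomp f = -(f.pcomp f))
    {x y z : H} (hxy : (x, y) ∈ f.graph) : (y, z) ∈ g.graph ↔ (y, -z) ∈ f.graph := by
  constructor
  · intro hyz
    have hxz : (x, z) ∈ (g.pcomp f).graph := mem_graph_pcomp.mpr ⟨y, hxy, hyz⟩
    rw [h, mem_graph_neg, mem_graph_pcomp] at hxz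
    obtain ⟨y', hxy', hy'z⟩ := hxz
    rwa [f.mem_graph_snd_inj hxy hxy' rfl]
  · intro hyz
    have hxz : (x, z) ∈ (-(f.pcomp f)).graph :=
      mem_graph_neg.mpr (mem_graph_pcomp.mpr ⟨y, hxy, hyz⟩)
    rw [← h, mem_graph_pcomp] at hxz
    obtain ⟨y', hxy', hy'z⟩ := hxz
    rwa [f.mem_graph_snd_inj hxy hxy' rfl]

theorem mem_adjoint_graph_iff {𝕜 E F : Type*} [RCLike 𝕜] [NormedAddCommGroup E]
    [InnerProductSpace 𝕜 E] [NormedAddCommGroup F] [InnerProductSpace 𝕜 F] [CompleteSpace E]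
    {T : E →ₗ.[𝕜] F} (hT : Dense (T.domain : Set E)) {y : F} {z : E} :
    (y, z) ∈ T†.graph ↔ ∀ a b, (a, b) ∈ T.graph → ⟪b, y⟫_𝕜 = ⟪a, z⟫_𝕜 := by
  simp only [adjoint_graph_eq_graph_adjoint hT, Submodule.mem_adjoint_iff, sub_eq_zero]

section GraphProjection

variable (A : H →ₗ.[ℂ] H) (hA : A.IsClosed)

noncomputable def closedGraph : ClosedSubmodule ℂ (WithLp 2 (H × H)) where
  toSubmodule := A.graph.comap (WithLp.linearEquiv 2 ℂ (H × H)).toLinearMap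
  isClosed' := hA.preimage (WithLp.prod_continuous_ofLp 2 H H)

local notation "𝒢" => (closedGraph A hA : Submodule ℂ (WithLp 2 (H × H)))

noncomputable def graphProj : H →L[ℂ] WithLp 2 (H × H) :=
  Submodule.starProjection 𝒢 ∘L
    (WithLp.prodContinuousLinearEquiv 2 ℂ H H).symm.toContinuousLinearMap ∘L
      ContinuousLinearMap.inl ℂ H H

/-- `graphProjFst = (1 + A†A)⁻¹` and `graphProjSnd = A (1 + A†A)⁻¹`. -/
noncomputable def graphProjFst : H →L[ℂ] H := WithLp.fstL 2 ℂ H H ∘L graphProj A hA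

noncomputable def graphProjSnd : H →L[ℂ] H := WithLp.sndL 2 ℂ H H ∘L graphProj A hA

local notation "ρ" => graphProjFst A hA
local notation "σ" => graphProjSnd A hA

variable {A}

theorem starProjection_closedGraph_toLp (w : H) :
    Submodule.starProjection 𝒢 (WithLp.toLp 2 (w, 0)) = WithLp.toLp 2 (ρ w, σ w) :=
  rfl

theorem mem_graph_graphProj (w : H) : (ρ w, σ w) ∈ A.graph :=
  Submodule.starProjection_apply_mem 𝒢 (WithLp.toLp 2 (w, 0))

theorem isSelfAdjoint_graphProjFst : IsSelfAdjoint ρ := by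
  rw [ContinuousLinearMap.isSelfAdjoint_iff_isSymmetric]
  intro u v
  simpa [graphProjFst, graphProj] using
    Submodule.inner_starProjection_left_eq_right 𝒢 (WithLp.toLp 2 (u, 0)) (WithLp.toLp 2 (v, 0))

variable (hdense : Dense (A.domain : Set H))
include hdense

theorem toLp_mem_orthogonal_closedGraph_iff {u v : H} :
    WithLp.toLp 2 (u, v) ∈ 𝒢ᗮ ↔ (-v, u) ∈ A†.graph := by
  rw [mem_adjoint_graph_iff hdense, Submodule.mem_orthogonal]
  refine ⟨fun h a b hab => ?_, fun h q hq => ?_⟩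
  · have := h (WithLp.toLp 2 (a, b)) hab
    simp only [WithLp.prod_inner_apply] at this
    rw [inner_neg_right]
    linear_combination -this
  · have := h _ _ hq
    rw [inner_neg_right] at this
    rw [WithLp.prod_inner_apply]
    linear_combination -this

theorem graphProjSnd_mem_adjoint_graph (w : H) : (σ w, w - ρ w) ∈ A†.graph := by
  have h := Submodule.sub_starProjection_mem_orthogonal (K := 𝒢) (WithLp.toLp 2 (w, 0))
  rw [starProjection_closedGraph_toLp, ← WithLp.toLp_sub, Prod.mk_sub_mk, zero_sub] at h
  simpa using (toLp_mem_orthogonal_closedGraph_iff hA hdense).mp h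

theorem graphProjFst_eq_of_mem_graph {w y z : H} (hzy : (z, y) ∈ A.graph)
    (hy : (y, w - z) ∈ A†.graph) : ρ w = z := by
  have hperp : WithLp.toLp 2 (w - z, -y) ∈ 𝒢ᗮ :=
    (toLp_mem_orthogonal_closedGraph_iff hA hdense).mpr (by simpa using hy)
  have hproj : graphProj A hA w = WithLp.toLp 2 (z, y) :=
    Submodule.eq_starProjection_of_mem_orthogonal (u := WithLp.toLp 2 (w, 0)) hzy
      (by rwa [← WithLp.toLp_sub, Prod.mk_sub_mk, zero_sub])
  simp [graphProjFst, hproj]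

theorem graphProjSnd_eq_zero (m : H) (hm : (1 - ρ) m = 0) : σ m = 0 := by
  have hρm : ρ m = m := (sub_eq_zero.mp (by simpa using hm)).symm
  have hpair := (mem_adjoint_graph_iff hdense).mp (graphProjSnd_mem_adjoint_graph hA hdense m) _ _
    (mem_graph_graphProj hA m)
  rwa [hρm, sub_self, inner_zero_right, inner_self_eq_zero] at hpair

variable (h : A†.pcomp A = -(A.pcomp A))
include h

theorem graphProjSnd_mem_graph (w : H) : (σ w, ρ w - w) ∈ A.graph := by
  simpa using (mem_graph_iff_of_pcomp_eq_neg h (mem_graph_graphProj hA w)).mp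
    (graphProjSnd_mem_adjoint_graph hA hdense w)

theorem graphProjFst_eq_graphProjSnd_of_mem_graph {x y : H} (hxy : (x, y) ∈ A.graph) :
    ρ y = σ x := by
  -- `σ x` solves `z + A†A z = y`: `A σ x = ρ x - x ∈ D(A)`, so `A†A σ x = -A (ρ x - x) = y - σ x`.
  have hx : (ρ x - x, σ x - y) ∈ A.graph := A.graph.sub_mem (mem_graph_graphProj hA x) hxy
  refine graphProjFst_eq_of_mem_graph hA hdense (graphProjSnd_mem_graph hA hdense h x) ?_
  rw [mem_graph_iff_of_pcomp_eq_neg h (graphProjSnd_mem_graph hA hdense h x)]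
  simpa using hx

theorem commute_graphProjSnd_graphProjFst : Commute σ ρ := by
  ext w
  exact (graphProjFst_eq_graphProjSnd_of_mem_graph hA hdense h (mem_graph_graphProj hA w)).symm

theorem star_graphProjSnd_mul : star σ * (1 - ρ) = -((1 - ρ) * σ) := by
  ext w
  refine ext_inner_right ℂ fun k => ?_
  have hpair := (mem_adjoint_graph_iff hdense).mp (graphProjSnd_mem_adjoint_graph hA hdense w) _ _
    (graphProjSnd_mem_graph hA hdense h k)
  have hρ := (isSelfAdjoint_graphProjFst hA).isSymmetric (σ w) k
  simp only [ContinuousLinearMap.coe_coe] at hρ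
  rw [mul_apply_eq_comp, ContinuousLinearMap.star_eq_adjoint,
    ContinuousLinearMap.adjoint_inner_left]
  simp only [_root_.neg_apply, mul_apply_eq_comp, _root_.sub_apply, one_apply_eq_self,
    inner_neg_left]
  rw [← inner_conj_symm, ← hpair, inner_conj_symm, inner_sub_right, inner_sub_left, hρ]
  ring

theorem star_graphProjSnd : star σ = -σ :=
  ContinuousLinearMap.star_eq_neg_of_commute
    ((IsSelfAdjoint.one _).sub (isSelfAdjoint_graphProjFst hA)) (graphProjSnd_eq_zero hA hdense)
    ((Commute.one_right _).sub_right (commute_graphProjSnd_graphProjFst hA hdense h))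
    (star_graphProjSnd_mul hA hdense h)

theorem graphProjFst_mem_adjoint_graph (w : H) : (ρ w, -σ w) ∈ A†.graph := by
  rw [mem_adjoint_graph_iff hdense]
  intro a b hab
  have hρ := (isSelfAdjoint_graphProjFst hA).isSymmetric b w
  have hσ : star σ w = -σ w := by rw [star_graphProjSnd hA hdense h, _root_.neg_apply]
  simp only [ContinuousLinearMap.coe_coe] at hρ
  rw [← hρ, graphProjFst_eq_graphProjSnd_of_mem_graph hA hdense h hab, ← hσ,
    ContinuousLinearMap.star_eq_adjoint, ContinuousLinearMap.adjoint_inner_right]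

include hA

theorem exists_add_adjoint_eq_and_sub_eq (t : H) :
    ∃ x, (x, t - x) ∈ A†.graph ∧ (x, x - t) ∈ A.graph := by
  refine ⟨ρ t + σ t, ?_, ?_⟩
  · have hx := A†.graph.add_mem (graphProjFst_mem_adjoint_graph hA hdense h t)
      (graphProjSnd_mem_adjoint_graph hA hdense t)
    rw [Prod.mk_add_mk] at hx
    convert hx using 2
    abel
  · have hx := A.graph.add_mem (mem_graph_graphProj hA t) (graphProjSnd_mem_graph hA hdense h t)
    rw [Prod.mk_add_mk] at hx
    convert hx using 2
    abel

theorem exists_add_eq_and_sub_adjoint_eq (t : H) :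
    ∃ x, (x, t - x) ∈ A.graph ∧ (x, x - t) ∈ A†.graph := by
  refine ⟨ρ t - σ t, ?_, ?_⟩
  · have hx := A.graph.sub_mem (mem_graph_graphProj hA t) (graphProjSnd_mem_graph hA hdense h t)
    rw [Prod.mk_sub_mk] at hx
    convert hx using 2
    abel
  · have hx := A†.graph.sub_mem (graphProjFst_mem_adjoint_graph hA hdense h t)
      (graphProjSnd_mem_adjoint_graph hA hdense t)
    rw [Prod.mk_sub_mk] at hx
    convert hx using 2
    abel

end GraphProjection

end LinearPMap

theorem stmt18 (A : H →ₗ.[ℂ] H) (hdense : Dense (A.domain : Set H)) (hclosed : A.IsClosed)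
    (h : A.adjoint.pcomp A = -(A.pcomp A)) : A.adjoint = -A := by
  have hadj := A.adjoint_isFormalAdjoint hdense
  have h₁ := exists_add_adjoint_eq_and_sub_eq hclosed hdense h
  have h₂ := exists_add_eq_and_sub_adjoint_eq hclosed hdense h
  refine eq_of_eq_graph (Submodule.ext fun ⟨y, z⟩ => ?_)
  rw [mem_graph_neg]
  refine ⟨hadj.mem_graph_neg_of_forall_exists h₁ fun t => (h₂ t).imp fun _ => And.left,
    fun hyz => ?_⟩
  simpa using
    hadj.symm.mem_graph_neg_of_forall_exists h₂ (fun t => (h₁ t).imp fun _ => And.left) hyz
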